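/- Let G be a group and let a, b ∈ G satisfy a^4 = 1, b^3 = 1, and ⁅b*a*b, a^2*(b*a*b)*a^2⁆ = 1, and set v = a^2*b*a*b*a^2. Then ⁅v, b*v*b^2⁆ = 1 holds if and only if for all ε₁, ε₂, ε₃ ∈ {1, 2}, setting g = b^{ε₃} * a^2 * b^{ε₂} * a^2 * b^{ε₁} and c = g⁻¹ * b^{2ε₃} * a^{2ε₃ − 1} * g, one has a^{2ε₁ + 1} * c * a^{2ε₁ − 1} = b^{2ε₁} * c * b^{ε₁}. -/

import Mathlib

/-!
Since `a⁴ = b³ = 1`, FE(g) says that the flip `c = g⁻¹ h g`, `h = b^{2ε₃} a^{2ε₃-1}`, commutes with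
`a^{2ε₁-1} b^{2ε₁}`, i.e. that `h` commutes with `g a^{2ε₁-1} b^{2ε₁} g⁻¹`. Conjugating both by
`(b^{ε₃} a²)⁻¹` turns this into `v_{ε₃}` commuting with `b^{ε₂} v_{ε₁} b^{-ε₂}`, where
`v_ε = a² b^ε a^{2ε-1} b^ε a²` (`vWord`) equals `v` for `ε = 1` and `v⁻¹` for `ε = 2`. So every
instance of FE is equivalent to `v` commuting with `b^{±1} v b^{∓1}`, which is (†) up to
conjugation by `b`.
-/

open scoped commutatorElement

section
variable {G : Type*} [Group G]

theorem pow_eq_inv_pow_of_add_eq {x : G} {m n k : ℕ} (hx : x ^ k = 1) (h : m + n = k) :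
    x ^ m = (x ^ n)⁻¹ :=
  eq_inv_of_mul_eq_one_left (by rw [← pow_add, h, hx])

theorem inv_mul_mul_eq_mul_mul_inv_iff_commute (α β c : G) :
    α⁻¹ * c * α = β * c * β⁻¹ ↔ Commute c (α * β) := by
  rw [← mul_left_cancel_iff (a := α), ← mul_right_cancel_iff (a := β)]
  simp only [Commute, SemiconjBy, mul_assoc, mul_inv_cancel_left, inv_mul_cancel, mul_one]

theorem commute_inv_mul_mul_iff (g h x : G) :
    Commute (g⁻¹ * h * g) x ↔ Commute h (g * x * g⁻¹) := by
  rw [← Commute.conj_iff g]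
  group

theorem commute_iff_of_eq_or_eq_inv {x y u w : G} (hx : x = u ∨ x = u⁻¹)
    (hy : y = w ∨ y = w⁻¹) : Commute x y ↔ Commute u w := by
  rcases hx with rfl | rfl <;> rcases hy with rfl | rfl <;>
    simp only [Commute.inv_left_iff, Commute.inv_right_iff]

theorem commute_inv_mul_mul_self_iff (x y : G) :
    Commute x (y⁻¹ * x * y) ↔ Commute x (y * x * y⁻¹) := by
  rw [← Commute.conj_iff y, Commute.symm_iff]
  group

variable {a b : G}

def vWord (a b : G) (ε : ℕ) : G := a ^ 2 * b ^ ε * a ^ (2 * ε - 1) * b ^ ε * a ^ 2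

theorem fe_iff_commute (ha : a ^ 4 = 1) (hb : b ^ 3 = 1) {ε : ℕ} (hε : 1 ≤ ε) (c : G) :
    a ^ (2 * ε + 1) * c * a ^ (2 * ε - 1) = b ^ (2 * ε) * c * b ^ ε ↔
      Commute c (a ^ (2 * ε - 1) * b ^ (2 * ε)) := by
  have ha' : a ^ (2 * ε + 1) = (a ^ (2 * ε - 1))⁻¹ :=
    pow_eq_inv_pow_of_add_eq (k := 4 * ε) (by rw [pow_mul, ha, one_pow]) (by omega)
  have hb' : b ^ ε = (b ^ (2 * ε))⁻¹ :=
    pow_eq_inv_pow_of_add_eq (k := 3 * ε) (by rw [pow_mul, hb, one_pow]) (by omega)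
  rw [ha', hb', inv_mul_mul_eq_mul_mul_inv_iff_commute]

theorem fe_iff_commute_vWord (ha : a ^ 4 = 1) (hb : b ^ 3 = 1) {ε₁ : ℕ} (hε₁ : 1 ≤ ε₁)
    (ε₂ ε₃ : ℕ) (g : G) (hg : g = b ^ ε₃ * a ^ 2 * b ^ ε₂ * a ^ 2 * b ^ ε₁) :
    a ^ (2 * ε₁ + 1) * (g⁻¹ * b ^ (2 * ε₃) * a ^ (2 * ε₃ - 1) * g) * a ^ (2 * ε₁ - 1)
        = b ^ (2 * ε₁) * (g⁻¹ * b ^ (2 * ε₃) * a ^ (2 * ε₃ - 1) * g) * b ^ ε₁ ↔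
      Commute (vWord a b ε₃) (b ^ ε₂ * vWord a b ε₁ * (b ^ ε₂)⁻¹) := by
  have ha2 : a ^ 2 = (a ^ 2)⁻¹ := pow_eq_inv_pow_of_add_eq ha rfl
  set p := b ^ ε₃ * a ^ 2
  have hflip : b ^ (2 * ε₃) * a ^ (2 * ε₃ - 1) = p * vWord a b ε₃ * p⁻¹ := by
    simp only [p, vWord, mul_inv_rev, ← ha2]
    group
    simp only [(zpow_ofNat a 4).trans ha, mul_one]
    group
  have hconj : g * (a ^ (2 * ε₁ - 1) * b ^ (2 * ε₁)) * g⁻¹ =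
      p * (b ^ ε₂ * vWord a b ε₁ * (b ^ ε₂)⁻¹) * p⁻¹ := by
    simp only [hg, p, vWord, mul_inv_rev, ← ha2]
    group
  rw [fe_iff_commute ha hb hε₁, mul_assoc g⁻¹, commute_inv_mul_mul_iff, hflip, hconj,
    Commute.conj_iff]

theorem vWord_one : vWord a b 1 = a ^ 2 * b * a * b * a ^ 2 := by
  simp [vWord]

theorem vWord_two (ha : a ^ 4 = 1) (hb : b ^ 3 = 1) : vWord a b 2 = (vWord a b 1)⁻¹ := by
  have ha2 : a ^ 2 = (a ^ 2)⁻¹ := pow_eq_inv_pow_of_add_eq ha rfl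
  have ha3 : a ^ 3 = (a ^ 1)⁻¹ := pow_eq_inv_pow_of_add_eq ha rfl
  have hb2 : b ^ 2 = (b ^ 1)⁻¹ := pow_eq_inv_pow_of_add_eq hb rfl
  rw [vWord_one, vWord]
  simp only [mul_inv_rev, Nat.reduceMul, Nat.reduceSub, ha3, hb2, ← ha2, pow_one, mul_assoc]

theorem vWord_eq_or_eq_inv (ha : a ^ 4 = 1) (hb : b ^ 3 = 1) {ε : ℕ}
    (hε : ε ∈ ({1, 2} : Set ℕ)) : vWord a b ε = vWord a b 1 ∨ vWord a b ε = (vWord a b 1)⁻¹ := by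
  rcases hε with rfl | rfl
  · exact .inl rfl
  · exact .inr (vWord_two ha hb)

theorem commute_conj_pow_iff (hb : b ^ 3 = 1) {ε : ℕ} (hε : ε ∈ ({1, 2} : Set ℕ)) (x : G) :
    Commute x (b ^ ε * x * (b ^ ε)⁻¹) ↔ Commute x (b * x * b⁻¹) := by
  rcases hε with rfl | rfl
  · rw [pow_one]
  · rw [pow_eq_inv_pow_of_add_eq hb (rfl : 2 + 1 = 3), pow_one, inv_inv,
      commute_inv_mul_mul_self_iff]

theorem fe_length_three_iff (ha : a ^ 4 = 1) (hb : b ^ 3 = 1) {ε₁ ε₂ ε₃ : ℕ}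
    (hε₁ : ε₁ ∈ ({1, 2} : Set ℕ)) (hε₂ : ε₂ ∈ ({1, 2} : Set ℕ)) (hε₃ : ε₃ ∈ ({1, 2} : Set ℕ))
    (g : G) (hg : g = b ^ ε₃ * a ^ 2 * b ^ ε₂ * a ^ 2 * b ^ ε₁) :
    a ^ (2 * ε₁ + 1) * (g⁻¹ * b ^ (2 * ε₃) * a ^ (2 * ε₃ - 1) * g) * a ^ (2 * ε₁ - 1)
        = b ^ (2 * ε₁) * (g⁻¹ * b ^ (2 * ε₃) * a ^ (2 * ε₃ - 1) * g) * b ^ ε₁ ↔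
      Commute (vWord a b 1) (b * vWord a b 1 * b⁻¹) := by
  have hε₁_pos : 1 ≤ ε₁ := by rcases hε₁ with rfl | rfl <;> norm_num
  rw [fe_iff_commute_vWord ha hb hε₁_pos ε₂ ε₃ g hg, ← commute_conj_pow_iff hb hε₂,
    commute_iff_of_eq_or_eq_inv (vWord_eq_or_eq_inv ha hb hε₃)]
  rcases vWord_eq_or_eq_inv ha hb hε₁ with h | h <;> rw [h]
  · exact .inl rfl
  · exact .inr (conj_inv ..).symm

end

theorem dagger_iff_FE_length_three_general {G : Type*} [Group G] (a b : G)
    (ha : a ^ 4 = 1) (hb : b ^ 3 = 1) :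
    (⁅a ^ 2 * b * a * b * a ^ 2,
        b * (a ^ 2 * b * a * b * a ^ 2) * b ^ 2⁆ = 1) ↔
      (∀ ε₁ ∈ ({1, 2} : Set ℕ), ∀ ε₂ ∈ ({1, 2} : Set ℕ), ∀ ε₃ ∈ ({1, 2} : Set ℕ),
        ∀ g c : G, g = b ^ ε₃ * a ^ 2 * b ^ ε₂ * a ^ 2 * b ^ ε₁ →
          c = g⁻¹ * b ^ (2 * ε₃) * a ^ (2 * ε₃ - 1) * g →
            a ^ (2 * ε₁ + 1) * c * a ^ (2 * ε₁ - 1)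
              = b ^ (2 * ε₁) * c * b ^ ε₁) := by
  have h12 : 1 ∈ ({1, 2} : Set ℕ) := .inl rfl
  rw [commutatorElement_eq_one_iff_commute, pow_eq_inv_pow_of_add_eq hb (rfl : 2 + 1 = 3),
    pow_one, ← vWord_one]
  constructor
  · rintro hv ε₁ hε₁ ε₂ hε₂ ε₃ hε₃ g c hg rfl
    exact (fe_length_three_iff ha hb hε₁ hε₂ hε₃ g hg).2 hv
  · intro hfe
    exact (fe_length_three_iff ha hb h12 h12 h12 _ rfl).1 (hfe 1 h12 1 h12 1 h12 _ _ rfl rfl)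

/-- Given the First Commutator relation, the relation (†) `⁅v, b*v*b^2⁆ = 1`
with `v = a^2*b*a*b*a^2` is equivalent to the functional equation FE(g) for
all length-three normal-form words `g = b^{ε₃} a² b^{ε₂} a² b^{ε₁}` with
`ε₁, ε₂, ε₃ ∈ {1,2}`. -/
theorem dagger_iff_FE_length_three {G : Type*} [Group G] (a b : G)
    (ha : a ^ 4 = 1) (hb : b ^ 3 = 1)
    (hc1 : ⁅b * a * b, a ^ 2 * (b * a * b) * a ^ 2⁆ = 1) :
    (⁅a ^ 2 * b * a * b * a ^ 2,
        b * (a ^ 2 * b * a * b * a ^ 2) * b ^ 2⁆ = 1) ↔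
      (∀ ε₁ ∈ ({1, 2} : Set ℕ), ∀ ε₂ ∈ ({1, 2} : Set ℕ), ∀ ε₃ ∈ ({1, 2} : Set ℕ),
        ∀ g c : G, g = b ^ ε₃ * a ^ 2 * b ^ ε₂ * a ^ 2 * b ^ ε₁ →
          c = g⁻¹ * b ^ (2 * ε₃) * a ^ (2 * ε₃ - 1) * g →
            a ^ (2 * ε₁ + 1) * c * a ^ (2 * ε₁ - 1)
              = b ^ (2 * ε₁) * c * b ^ ε₁) :=
  dagger_iff_FE_length_three_general a b ha hb
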